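/- arXiv:math/0512111 — 2 statements merged into one kernel-verified Lean document; each statement's English description precedes it below -/
import Mathlib

section
/- For every partition λ into distinct parts λ₁ > λ₂ > ⋯ > λ_s > 0, the sequence (λ₁, λ₂+1, λ₃+2, …, λ_s+s-1, λᵗ_{s+1}, λᵗ_{s+2}, …, λᵗ_{λ₁}), where λᵗ denotes the conjugate partition, is a weakly decreasing sequence of positive integers, i.e., it is a partition. -/
/-- `l` is a partition into distinct parts with exactly `s` (strictly decreasing,
positive) parts, listed `0`-indexed, with zeros beyond index `s`. -/
def IsDistinctParts (l : ℕ → ℕ) (s : ℕ) : Prop :=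
  (∀ i, i < s → 0 < l i) ∧ (∀ i, s ≤ i → l i = 0) ∧ (∀ i, i + 1 < s → l (i + 1) < l i)

/-- The map `η̃`: the `p`-th entry (0-indexed) is `λ_{p+1} + p` for `p < s`, and the
conjugate value `λᵗ_{p+1} = #{i : λ_i ≥ p+1}` for `p ≥ s`. -/
def etaTilde (l : ℕ → ℕ) (s : ℕ) : ℕ → ℕ :=
  fun p => if p < s then l p + p else ((Finset.range s).filter (fun i => p + 1 ≤ l i)).card

/-- `η̃(λ)` is a weakly decreasing sequence whose entries in positions
`0, …, λ₁ - 1` are positive, i.e. it is a partition. -/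
theorem etaTilde_isPartition (l : ℕ → ℕ) (s : ℕ) (h : IsDistinctParts l s) :
    (∀ p, etaTilde l s (p + 1) ≤ etaTilde l s p) ∧
    (∀ p, p < l 0 → 0 < etaTilde l s p) := by
  obtain ⟨hpos, hzero, hdec⟩ := h
  constructor
  · intro p
    unfold etaTilde
    by_cases h1 : p + 1 < s
    · have hp : p < s := by omega
      simp only [h1, hp, if_true]
      have := hdec p h1
      omega
    · by_cases h2 : p < s
      · simp only [h1, h2, if_true, if_false]
        have hl : 0 < l p := hpos p h2
        have hc : ((Finset.range s).filter (fun i => p + 1 + 1 ≤ l i)).card ≤ s := by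
          calc ((Finset.range s).filter (fun i => p + 1 + 1 ≤ l i)).card
              ≤ (Finset.range s).card := Finset.card_filter_le _ _
            _ = s := Finset.card_range s
        omega
      · have h3 : ¬ p + 1 < s := by omega
        simp only [h3, h2, if_false]
        apply Finset.card_le_card
        intro i hi
        simp only [Finset.mem_filter, Finset.mem_range] at *
        omega
  · intro p hp
    unfold etaTilde
    by_cases h2 : p < s
    · simp only [h2, if_true]
      have := hpos p h2
      omega
    · simp only [h2, if_false]
      have hs : 0 < s := by
        by_contra hs
        have := hzero 0 (by omega)
        omega
      have : (0 : ℕ) ∈ (Finset.range s).filter (fun i => p + 1 ≤ l i) := by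
        simp only [Finset.mem_filter, Finset.mem_range]
        exact ⟨hs, by omega⟩
      exact Finset.card_pos.mpr ⟨0, this⟩
end

section
/- The map η̃ from partitions into distinct parts to partitions, defined by η̃(λ) = (λ₁, λ₂+1, …, λ_s+s-1, λᵗ_{s+1}, …, λᵗ_{λ₁}), is injective. -/
lemma etaTilde_gt_iff (l : ℕ → ℕ) (s : ℕ) (hl : IsDistinctParts l s) (p : ℕ) :
    p < s ↔ p < etaTilde l s p := by
  unfold etaTilde
  constructor
  · intro h
    simp only [h, if_pos]
    have := hl.1 p h
    omega
  · intro h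
    by_contra hp
    rw [if_neg hp] at h
    have : ((Finset.range s).filter (fun i => p + 1 ≤ l i)).card ≤ s := by
      calc _ ≤ (Finset.range s).card := Finset.card_filter_le _ _
        _ = s := Finset.card_range s
    omega

/-- the map `η̃` is injective on partitions into distinct parts. -/
theorem etaTilde_injective (l m : ℕ → ℕ) (s s' : ℕ)
    (hl : IsDistinctParts l s) (hm : IsDistinctParts m s')
    (heq : etaTilde l s = etaTilde m s') :
    l = m ∧ s = s' := by
  have hss : s = s' := by
    by_contra h
    rcases Nat.lt_or_ge s s' with hlt | hge
    · have h1 : s < etaTilde m s' s := (etaTilde_gt_iff m s' hm s).mp hlt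
      have h2 : ¬ s < etaTilde l s s := by
        rw [← etaTilde_gt_iff l s hl]; omega
      rw [heq] at h2; exact h2 h1
    · have hlt : s' < s := by omega
      have h1 : s' < etaTilde l s s' := (etaTilde_gt_iff l s hl s').mp hlt
      have h2 : ¬ s' < etaTilde m s' s' := by
        rw [← etaTilde_gt_iff m s' hm]; omega
      rw [← heq] at h2; exact h2 h1
  subst hss
  refine ⟨funext fun p => ?_, rfl⟩
  by_cases hp : p < s
  · have := congrFun heq p
    unfold etaTilde at this
    rw [if_pos hp, if_pos hp] at this
    omega
  · rw [hl.2.1 p (by omega), hm.2.1 p (by omega)]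
end
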